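/- arXiv:1105.4393 — 8 statements merged into one kernel-verified Lean document; each statement's English description precedes it below -/
import Mathlib

section
/- If X is a λ-synchronizing subshift and μ ∈ Sₗ(X), then there exists μ' ∈ S_{l+1}(X) such that Γₗ⁻(μ) = Γₗ⁻(μ'); that is, every l-synchronizing word is l-past equivalent to an (l+1)-synchronizing word. -/
/-- A subshift presented by its language: nonempty, factorial, and bi-extendable. -/
structure SubshiftLang (A : Type*) where
  L : List A → Prop
  nonempty : L []
  factorial : ∀ u v w : List A, L (u ++ v ++ w) → L v
  extendable : ∀ u : List A, L u → ∃ a b : A, L (a :: (u ++ [b]))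

variable {A : Type*}

/-- `v` is an `l`-synchronizing word: every length-`l` predecessor of `v`
lies in `ω⁻ₗ(v)`. -/
def SubshiftLang.Sync (X : SubshiftLang A) (l : ℕ) (v : List A) : Prop :=
  X.L v ∧ ∀ b : List A, b.length = l → X.L (b ++ v) →
    ∀ c : List A, X.L (v ++ c) → X.L (b ++ v ++ c)

/-- `X` is λ-synchronizing: every admissible word extends on the right to a
`k`-synchronizing word, for every `k`. -/
def SubshiftLang.LambdaSync (X : SubshiftLang A) : Prop :=
  ∀ w : List A, X.L w → ∀ k : ℕ, ∃ v : List A, X.Sync k v ∧ X.L (w ++ v)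

/-- `l`-past equivalence: `μ` and `ν` have the same length-`l` predecessors. -/
def SubshiftLang.PastEq (X : SubshiftLang A) (l : ℕ) (μ ν : List A) : Prop :=
  ∀ b : List A, b.length = l → (X.L (b ++ μ) ↔ X.L (b ++ ν))

/-- Lemma 2.2 (ii): every l-synchronizing word is l-past equivalent to an
(l+1)-synchronizing word. -/
theorem stmt2 [Fintype A] (X : SubshiftLang A) (hX : X.LambdaSync)
    (l : ℕ) (μ : List A) (hμ : X.Sync l μ) :
    ∃ μ' : List A, X.Sync (l + 1) μ' ∧ X.PastEq l μ μ' := by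
  obtain ⟨v, hv, hμv⟩ := hX μ hμ.1 (l + 1 + μ.length)
  refine ⟨μ ++ v, ⟨hμv, ?_⟩, ?_⟩
  · intro b hb hbμv c hc
    have hvc : X.L (v ++ c) := X.factorial μ (v ++ c) [] (by simpa using hc)
    have h := hv.2 (b ++ μ) (by simp [hb]) (by simpa [List.append_assoc] using hbμv)
      c hvc
    simpa [List.append_assoc] using h
  · intro b hb
    constructor
    · intro hbμ
      simpa [List.append_assoc] using hμ.2 b hb hbμ v hμv
    · intro h
      exact X.factorial [] (b ++ μ) v (by simpa [List.append_assoc] using h)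
end

section
/- If X is a λ-synchronizing subshift and μ ∈ Sₗ(X), then there exist a symbol β ∈ Σ and a word ν ∈ S_{l+1}(X) such that βν ∈ L(X) and Γₗ⁻(μ) = Γₗ⁻(βν). -/
variable {A : Type*}

/-- Lemma 2.2 (iii): every l-synchronizing word μ is l-past equivalent to βν
for some symbol β and (l+1)-synchronizing word ν. -/
theorem stmt3 [Fintype A] (X : SubshiftLang A) (hX : X.LambdaSync)
    (l : ℕ) (μ : List A) (hμ : X.Sync l μ) :
    ∃ (β : A) (ν : List A), X.Sync (l + 1) ν ∧ X.L (β :: ν) ∧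
      X.PastEq l μ (β :: ν) := by
  cases μ with
  | nil =>
    obtain ⟨v, hv, hvL⟩ := hX [] hμ.1 (l + 1)
    rw [List.nil_append] at hvL
    obtain ⟨a, b, hab⟩ := X.extendable v hv.1
    have hav : X.L (a :: v) := X.factorial [] (a :: v) [b] (by simpa using hab)
    refine ⟨a, v, hv, hav, ?_⟩
    intro b' hb'
    constructor
    · intro h
      have := hμ.2 b' hb' (by simpa using h) (a :: v) (by simpa using hav)
      simpa using this
    · intro h
      simpa using X.factorial [] b' (a :: v) (by simpa using h)
  | cons β μ' =>
    obtain ⟨v, hv, hvL⟩ := hX (β :: μ') hμ.1 (l + (β :: μ').length)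
    refine ⟨β, μ' ++ v, ⟨?_, ?_⟩, ?_, ?_⟩
    · exact X.factorial [β] (μ' ++ v) [] (by simpa using hvL)
    · intro b hb hbv c hc
      have h1 : X.L ((b ++ μ') ++ v) := by
        simpa [List.append_assoc] using hbv
      have h2 : X.L (v ++ c) :=
        X.factorial μ' (v ++ c) [] (by simpa [List.append_assoc] using hc)
      have hlen : (b ++ μ').length = l + (β :: μ').length := by
        simp [hb]; omega
      have := hv.2 (b ++ μ') hlen h1 c h2
      simpa [List.append_assoc] using this
    · simpa using hvL
    · intro b hb
      constructor
      · intro h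
        have := hμ.2 b hb h v hvL
        simpa [List.append_assoc] using this
      · intro h
        have : X.L ([] ++ (b ++ β :: μ') ++ v) := by
          simpa [List.append_assoc] using h
        simpa using X.factorial [] (b ++ β :: μ') v this
end

section
/- Let X be a λ-synchronizing subshift, let μ ∈ Sₗ(X), and suppose ν ∈ S_k(X) satisfies μν ∈ S_{k-|μ|}(X) with k ≥ |μ| + l. Then Γₗ⁻(μ) = Γₗ⁻(μν). -/
variable {A : Type*}

/-- If μ ∈ Sₗ(X), ν ∈ S_k(X) and μν ∈ S_{k-|μ|}(X) with k ≥ |μ| + l, then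
Γₗ⁻(μ) = Γₗ⁻(μν). -/
theorem stmt4 [Fintype A] (X : SubshiftLang A) (hX : X.LambdaSync)
    (l k : ℕ) (μ ν : List A) (hμ : X.Sync l μ) (hν : X.Sync k ν)
    (hμν : X.Sync (k - μ.length) (μ ++ ν)) (hk : μ.length + l ≤ k) :
    X.PastEq l μ (μ ++ ν) := by
  intro b hb
  constructor
  · intro h
    have := hμ.2 b hb h ν hμν.1
    simpa [List.append_assoc] using this
  · intro h
    have : X.L ([] ++ (b ++ μ) ++ ν) := by simpa [List.append_assoc] using h
    exact X.factorial _ _ _ this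
end

section
/- Every topologically transitive synchronizing subshift (a subshift possessing a synchronizing word, with every admissible word extendable to meet the synchronizing word) is λ-synchronizing. -/
variable {A : Type*}

/-- Every topologically transitive synchronizing subshift is λ-synchronizing. -/
theorem stmt7 [Fintype A] (X : SubshiftLang A)
    (htrans : ∀ u w : List A, X.L u → X.L w → ∃ m : List A, X.L (u ++ m ++ w))
    (v : List A) (hv : X.L v)
    (hsync : ∀ u w : List A, X.L (u ++ v) → X.L (v ++ w) → X.L (u ++ v ++ w)) :
    X.LambdaSync := by
  intro w hw k
  obtain ⟨m, hm⟩ := htrans w v hw hv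
  refine ⟨m ++ v, ⟨?_, ?_⟩, by simpa [List.append_assoc] using hm⟩
  · exact X.factorial w (m ++ v) [] (by simpa [List.append_assoc] using hm)
  · intro b _ hbmv c hc
    have h1 : X.L ((b ++ m) ++ v) := by simpa [List.append_assoc] using hbmv
    have h2 : X.L (v ++ c) := X.factorial m (v ++ c) [] (by simpa [List.append_assoc] using hc)
    simpa [List.append_assoc] using hsync (b ++ m) c h1 h2
end

section
/- For a subshift X, if every admissible word b admits an admissible word a with ba ∈ L(X) and b ∈ ω⁻_{|b|}(a), then X is λ-synchronizing: for every admissible b of length K there exists a ∈ S_K(X) with ba ∈ L(X). (Direction (iii) ⇒ (ii) via taking a ∈ S_K(X) ∩ Γ⁺(b).) -/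
variable {A : Type*}

/-!
Call `b` *good* for `v` if either `b v` is not admissible or `b ∈ ω⁻(v)`; goodness persists
when `v` is extended on the right. The hypothesis makes any single `b` good after a suitable
right extension, so extending successively for each of the finitely many words of length `k`
turns a word `v₀` with `w ∈ ω⁻(v₀)` into a `k`-synchronizing word that still follows `w`.
-/

namespace SubshiftLang

variable (X : SubshiftLang A)

/-- `b ∈ ω⁻(v)`, without the constraints on the length and admissibility of `b`. -/
def OmegaPred (b v : List A) : Prop :=
  ∀ c : List A, X.L (v ++ c) → X.L (b ++ v ++ c)

def GoodPred (b v : List A) : Prop :=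
  X.L (b ++ v) → X.OmegaPred b v

variable {X}

theorem L_prefix {u v : List A} (h : X.L (u ++ v)) : X.L u :=
  X.factorial [] u v (by simpa using h)

theorem L_suffix {u v : List A} (h : X.L (u ++ v)) : X.L v :=
  X.factorial u v [] (by simpa using h)

theorem OmegaPred.append {b v : List A} (h : X.OmegaPred b v) (a : List A) :
    X.OmegaPred b (v ++ a) := by
  intro c hc
  simpa using h (a ++ c) (by simpa using hc)

theorem GoodPred.append {b v : List A} (h : X.GoodPred b v) (a : List A) :
    X.GoodPred b (v ++ a) := fun hbva =>
  (h (L_prefix (by simpa using hbva))).append a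

theorem exists_append_goodPred (h : ∀ b, X.L b → ∃ a, X.L (b ++ a) ∧ X.OmegaPred b a)
    (b : List A) {v : List A} (hv : X.L v) : ∃ a, X.L (v ++ a) ∧ X.GoodPred b (v ++ a) := by
  by_cases hbv : X.L (b ++ v)
  · obtain ⟨a, hbva, hωa⟩ := h (b ++ v) hbv
    refine ⟨a, L_suffix (u := b) (by simpa using hbva), fun _ c hvac => ?_⟩
    simpa using hωa c (L_suffix (u := v) (by simpa using hvac))
  · exact ⟨[], by simpa using hv, fun hbv' => absurd (by simpa using hbv') hbv⟩

theorem exists_append_forall_goodPred (h : ∀ b, X.L b → ∃ a, X.L (b ++ a) ∧ X.OmegaPred b a)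
    (S : Finset (List A)) {v : List A} (hv : X.L v) :
    ∃ a, X.L (v ++ a) ∧ ∀ b ∈ S, X.GoodPred b (v ++ a) := by
  classical
  induction S using Finset.induction_on with
  | empty => exact ⟨[], by simpa using hv, by simp⟩
  | insert b S _ ih =>
    obtain ⟨a₁, hva₁, hS⟩ := ih
    obtain ⟨a₂, hva₂, hb⟩ := exists_append_goodPred h b hva₁
    refine ⟨a₁ ++ a₂, by simpa using hva₂, ?_⟩
    intro b' hb'
    rcases Finset.mem_insert.mp hb' with rfl | hb'S
    · simpa using hb
    · simpa using (hS b' hb'S).append a₂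

end SubshiftLang

open SubshiftLang in
/-- Lemma 2.1, (iii) ⇒ (ii): the ω⁻-extension property implies that X is
λ-synchronizing. -/
theorem stmt9 [Fintype A] (X : SubshiftLang A)
    (h : ∀ b : List A, X.L b → ∃ a : List A, X.L (b ++ a) ∧
        ∀ c : List A, X.L (a ++ c) → X.L (b ++ a ++ c)) :
    X.LambdaSync := by
  intro w hw k
  obtain ⟨v₀, hwv₀, hωv₀⟩ := h w hw
  obtain ⟨a, hv₀a, hgood⟩ :=
    exists_append_forall_goodPred h (List.finite_length_eq A k).toFinset (L_suffix hwv₀)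
  refine ⟨v₀ ++ a, ⟨hv₀a, fun b hb => hgood b (by simpa using hb)⟩, ?_⟩
  simpa using hωv₀ a hv₀a
end

section
/- In the coded system X of the previous construction, X has property (D): for every σ ∈ Σ and every word a with aσ ∈ L(X), there exists a word w with wa ∈ L(X) such that σ ∈ ω₁⁺(wa), i.e. for every c with cwa ∈ L(X), also cwaσ ∈ L(X). Concretely, if σ ≠ γ one may take w = 1^K (K = |a|), and if σ = γ one may take w = α. -/
/-- The five-letter alphabet {0, 1, α, β, γ}. -/
inductive C5 : Type
  | zero | one | alpha | beta | gamma
  deriving DecidableEq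

instance : Fintype C5 :=
  ⟨{C5.zero, C5.one, C5.alpha, C5.beta, C5.gamma}, fun x => by cases x <;> simp⟩

instance : TopologicalSpace C5 := ⊥
instance : DiscreteTopology C5 := ⟨rfl⟩

/-- `w` occurs in the bi-infinite sequence `x`. -/
def occursIn (w : List C5) (x : ℤ → C5) : Prop :=
  ∃ i : ℤ, ∀ j : Fin w.length, x (i + (j : ℤ)) = w.get j

/-- Forbidden words of the SFT `Yₙ`. -/
def Forb (n : ℕ) : Set (List C5) :=
  {w | (∃ m : ℕ, n < m ∧ w = List.replicate m C5.zero) ∨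
       (∃ k : ℕ, 1 ≤ k ∧ k ≤ n ∧ ∃ c : List C5, c.length = k ∧
          w = [C5.beta, C5.alpha] ++ c ++ [C5.gamma] ++
            List.replicate k C5.zero ++ [C5.gamma]) ∨
       w = [C5.beta, C5.beta] ∨ w = [C5.beta, C5.gamma] ∨
       w = [C5.beta, C5.zero] ∨ w = [C5.beta, C5.one]}

/-- The SFT `Yₙ`. -/
def Y (n : ℕ) : Set (ℤ → C5) := {x | ∀ w ∈ Forb n, ¬ occursIn w x}

/-- The coded system `X`: the closure of the increasing union of the `Yₙ`. -/
def Xcoded : Set (ℤ → C5) := closure (⋃ n : ℕ, Y n)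

/-- The language of a set of bi-infinite sequences. -/
def LangOf (S : Set (ℤ → C5)) (w : List C5) : Prop := ∃ x ∈ S, occursIn w x


/-!
A word lies in `L(X)` iff it avoids `Forb n` for some `n`: one direction because cylinders are
open, the other by placing the word `u` inside the point `1^∞ u α^∞`, which works because no
forbidden word begins with `1` or ends with `α`. Avoiding `Forb n` is monotone in `n`, since a
pattern `βα c γ 0^k γ` with `k > n` contains the forbidden run `0^k`.

Take `w = 1^(|a|+1)`. A forbidden word of `c w a σ` that lies neither in `c w a` nor in `a σ`
cannot begin inside the block of ones, so it overlaps the block completely. A run of zeros contains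
no `1` and the two-letter words are too short, so it is a pattern whose middle part `c` contains
the whole block; its tail `γ 0^k γ` then has length at least `k + 2` and so is longer than the
block, hence longer than `a σ`.
-/

namespace List

variable {α : Type*}

theorem length_le_of_append_eq_append_cons {x y p q : List α} {e : α}
    (h : x ++ y = p ++ e :: q) (hx : e ∉ x) : x.length ≤ p.length := by
  rcases append_eq_append_iff.mp h with ⟨r, rfl, -⟩ | ⟨r, rfl, hr⟩
  · simp
  · cases r with
    | nil => simp
    | cons b r =>
      simp only [cons_append, cons.injEq] at hr
      simp [hr.1] at hx

theorem length_le_of_append_append_eq_append_cons {x y z p q : List α} {e : α}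
    (h : x ++ y ++ z = p ++ e :: q) (hx : e ∉ x) (hz : e ∉ z) :
    x.length ≤ p.length ∧ z.length ≤ q.length := by
  refine ⟨length_le_of_append_eq_append_cons (y := y ++ z) (by rw [← h, append_assoc]) hx, ?_⟩
  have hrev : z.reverse ++ (y.reverse ++ x.reverse) = q.reverse ++ e :: p.reverse := by
    simpa using congrArg reverse h
  simpa using length_le_of_append_eq_append_cons hrev (by simpa using hz)

theorem head?_eq_of_infix_replicate {u : List α} {a : α} {j : ℕ} (hu : u ≠ [])
    (h : u <:+: replicate j a) : u.head? = some a := by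
  obtain ⟨b, t, rfl⟩ := exists_cons_of_ne_nil hu
  simpa using eq_of_mem_replicate (h.subset mem_cons_self)

theorem getLast?_eq_of_infix_replicate {u : List α} {a : α} {j : ℕ} (hu : u ≠ [])
    (h : u <:+: replicate j a) : u.getLast? = some a := by
  obtain ⟨b, hb⟩ := Option.ne_none_iff_exists'.mp (mt getLast?_eq_none_iff.mp hu)
  rw [hb, eq_of_mem_replicate (h.subset (mem_of_getLast? hb))]

theorem getD_append_replicate_self (l : List α) (d : α) (m n : ℕ) :
    (l ++ replicate m d).getD n d = l.getD n d := by
  rcases lt_or_ge n l.length with hn | hn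
  · exact getD_append _ _ _ _ hn
  · rw [getD_append_right _ _ _ _ hn, getD_eq_default _ _ hn]
    exact getElem?_getD_replicate_default_eq _ _ _

theorem infix_of_getD {v z : List α} {d : α} {s : ℕ} (hle : s + v.length ≤ z.length)
    (h : ∀ k (hk : k < v.length), z.getD (s + k) d = v[k]) : v <:+: z := by
  have hv : (z.drop s).take v.length = v := by
    apply ext_getElem (by simp only [length_take, length_drop]; omega)
    intro k hk _
    simp only [getElem_take, getElem_drop]
    rw [← h k (by omega), getD_eq_getElem]
  rw [← hv]
  exact (take_prefix _ _).isInfix.trans (drop_suffix _ _).isInfix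

end List

open List

section Forbidden

variable {n : ℕ} {v : List C5}

theorem ne_nil_of_mem_Forb (hv : v ∈ Forb n) : v ≠ [] := by
  rcases hv with ⟨m, hm, rfl⟩ | ⟨k, -, -, c, -, rfl⟩ | rfl | rfl | rfl | rfl <;> simp
  omega

theorem head?_ne_one_of_mem_Forb (hv : v ∈ Forb n) : v.head? ≠ some C5.one := by
  rcases hv with ⟨m, -, rfl⟩ | ⟨k, -, -, c, -, rfl⟩ | rfl | rfl | rfl | rfl <;>
    simp [head?_replicate]

theorem getLast?_ne_alpha_of_mem_Forb (hv : v ∈ Forb n) : v.getLast? ≠ some C5.alpha := by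
  rcases hv with ⟨m, -, rfl⟩ | ⟨k, -, -, c, -, rfl⟩ | rfl | rfl | rfl | rfl <;>
    simp [getLast?_replicate, getLast?_cons]

theorem exists_infix_mem_Forb_of_le {m N : ℕ} (hmN : m ≤ N) (hv : v ∈ Forb N) :
    ∃ v' ∈ Forb m, v' <:+: v := by
  rcases hv with ⟨m', hm', rfl⟩ | ⟨k, hk, -, c, hc, rfl⟩ | hpair
  · exact ⟨_, Or.inl ⟨m', by omega, rfl⟩, infix_rfl⟩
  · rcases le_or_gt k m with hkm | hkm
    · exact ⟨_, Or.inr (Or.inl ⟨k, hk, hkm, c, hc, rfl⟩), infix_rfl⟩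
    · exact ⟨replicate k C5.zero, Or.inl ⟨k, hkm, rfl⟩, infix_append _ _ _⟩
  · exact ⟨v, Or.inr (Or.inr hpair), infix_rfl⟩

theorem ne_append_replicate_one_append_of_mem_Forb {p q : List C5} {L : ℕ} (hv : v ∈ Forb n)
    (hq : q ≠ []) (hqL : q.length ≤ L) : v ≠ p ++ replicate L C5.one ++ q := by
  obtain ⟨L, rfl⟩ : ∃ L', L = L' + 1 := ⟨L - 1, by have := length_pos_iff.mpr hq; omega⟩
  intro h
  rcases hv with ⟨m, -, rfl⟩ | ⟨k, -, -, c, hc, rfl⟩ | hpair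
  · simpa using (congrArg (C5.one ∈ ·) h).mpr (by simp)
  · have h₁ : [C5.beta, C5.alpha] ++ c ++ (C5.gamma :: (replicate k C5.zero ++ [C5.gamma])) =
        p ++ C5.one :: (replicate L C5.one ++ q) := by
      simpa [replicate_succ] using h
    have h₂ : [C5.beta, C5.alpha] ++ c ++ (C5.gamma :: (replicate k C5.zero ++ [C5.gamma])) =
        (p ++ replicate L C5.one) ++ C5.one :: q := by
      simpa [replicate_succ'] using h
    -- the ones lie in `c`, so `p` covers `βα` and `q` covers `γ 0^k γ`
    have hp := (length_le_of_append_append_eq_append_cons h₁ (by simp) (by simp)).1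
    have hq' := (length_le_of_append_append_eq_append_cons h₂ (by simp) (by simp)).2
    have hlen := congrArg length h₁
    simp only [length_append, length_cons, length_replicate, length_nil] at hp hq' hlen
    omega
  · obtain ⟨x, rfl⟩ : ∃ x, v = [C5.beta, x] := by
      rcases hpair with rfl | rfl | rfl | rfl <;> exact ⟨_, rfl⟩
    cases p with
    | nil => simp [replicate_succ] at h
    | cons b p =>
      have hlen := congrArg length h
      have := length_pos_iff.mpr hq
      simp only [length_append, length_cons, length_replicate, length_nil] at hlen
      omega

end Forbidden

def AvoidsForb (n : ℕ) (u : List C5) : Prop := ∀ v ∈ Forb n, ¬ v <:+: u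

namespace AvoidsForb

variable {n : ℕ} {u : List C5}

theorem mono {m : ℕ} (h : AvoidsForb m u) (hmn : m ≤ n) : AvoidsForb n u := fun _ hv hvu =>
  let ⟨v', hv', hv'v⟩ := exists_infix_mem_Forb_of_le hmn hv
  h v' hv' (hv'v.trans hvu)

theorem of_infix {u' : List C5} (h : AvoidsForb n u) (hu' : u' <:+: u) : AvoidsForb n u' :=
  fun v hv hvu' => h v hv (hvu'.trans hu')

theorem replicate_one_append (h : AvoidsForb n u) (j : ℕ) :
    AvoidsForb n (replicate j C5.one ++ u) := by
  intro v hv hvu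
  rcases infix_append_iff_ne_nil.mp hvu with hv₁ | hv₂ | ⟨v₁, v₂, hv₁, -, rfl, hs, -⟩
  · exact head?_ne_one_of_mem_Forb hv
      (head?_eq_of_infix_replicate (ne_nil_of_mem_Forb hv) hv₁)
  · exact h v hv hv₂
  · apply head?_ne_one_of_mem_Forb hv
    rw [head?_append_of_ne_nil _ hv₁]
    exact head?_eq_of_infix_replicate hv₁ hs.isInfix

theorem append_replicate_alpha (h : AvoidsForb n u) (l : ℕ) :
    AvoidsForb n (u ++ replicate l C5.alpha) := by
  intro v hv hvu
  rcases infix_append_iff_ne_nil.mp hvu with hv₁ | hv₂ | ⟨v₁, v₂, -, hv₂, rfl, -, hp⟩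
  · exact h v hv hv₁
  · exact getLast?_ne_alpha_of_mem_Forb hv
      (getLast?_eq_of_infix_replicate (ne_nil_of_mem_Forb hv) hv₂)
  · apply getLast?_ne_alpha_of_mem_Forb hv
    rw [getLast?_append_of_ne_nil _ hv₂]
    exact getLast?_eq_of_infix_replicate hv₂ hp.isInfix

theorem append_replicate_one_append {c y : List C5} {L : ℕ}
    (hc : AvoidsForb n (c ++ replicate L C5.one)) (hy : AvoidsForb n y) (hyL : y.length ≤ L) :
    AvoidsForb n (c ++ replicate L C5.one ++ y) := by
  intro v hv hvu
  rcases infix_append_iff_ne_nil.mp hvu with hv₁ | hv₂ | ⟨v₁, v₂, hv₁, hv₂, rfl, ⟨t, ht⟩, hp⟩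
  · exact hc v hv hv₁
  · exact hy v hv hv₂
  · rcases append_eq_append_iff.mp ht with ⟨r, rfl, rfl⟩ | ⟨r, rfl, hr⟩
    · exact ne_append_replicate_one_append_of_mem_Forb hv hv₂ (hp.length_le.trans hyL) rfl
    · apply head?_ne_one_of_mem_Forb hv
      rw [head?_append_of_ne_nil _ hv₁]
      exact head?_eq_of_infix_replicate hv₁ (hr ▸ infix_append_right)

end AvoidsForb

theorem occursIn_of_infix {v u : List C5} {x : ℤ → C5} (hvu : v <:+: u) (hu : occursIn u x) :
    occursIn v x := by
  obtain ⟨p, t, rfl⟩ := hvu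
  obtain ⟨i, hi⟩ := hu
  refine ⟨i + p.length, fun j => ?_⟩
  have := hi ⟨p.length + j, by simp only [append_assoc, length_append]; omega⟩
  simp only [get_eq_getElem] at this ⊢
  rw [getElem_append_left (by simp), getElem_append_right (by simp)] at this
  simpa [add_assoc] using this

theorem isOpen_setOf_occursIn_at (u : List C5) (i : ℤ) :
    IsOpen {x : ℤ → C5 | ∀ j : Fin u.length, x (i + j) = u.get j} := by
  simp only [Set.ofPred_forall]
  exact isOpen_iInter_of_finite fun j =>
    (isOpen_discrete {u.get j}).preimage (continuous_apply (A := fun _ => C5) (i + j))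

theorem exists_avoidsForb_of_langOf {u : List C5} (hu : LangOf Xcoded u) :
    ∃ n, AvoidsForb n u := by
  obtain ⟨x, hx, i, hi⟩ := hu
  obtain ⟨y, hyu, hyY⟩ := mem_closure_iff.mp hx _ (isOpen_setOf_occursIn_at u i) hi
  obtain ⟨n, hyn⟩ := Set.mem_iUnion.mp hyY
  exact ⟨n, fun v hv hvu => hyn v hv (occursIn_of_infix hvu ⟨i, hyu⟩)⟩

def padded (u : List C5) : ℤ → C5 := fun t => if t < 0 then C5.one else u.getD t.toNat C5.alpha

theorem exists_infix_of_occursIn_padded {v u : List C5} (hv : occursIn v (padded u)) :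
    ∃ j l, v <:+: replicate j C5.one ++ u ++ replicate l C5.alpha := by
  obtain ⟨i, hi⟩ := hv
  refine ⟨(-i).toNat, i.toNat + v.length, infix_of_getD (d := C5.alpha) (s := i.toNat)
    (by simp only [append_assoc, length_append, length_replicate]; omega) fun k hk => ?_⟩
  have hik := hi ⟨k, hk⟩
  simp only [get_eq_getElem] at hik
  rw [← hik, getD_append_replicate_self, padded]
  split_ifs with hneg
  · exact getD_append _ _ _ _ (by rw [length_replicate]; omega) |>.trans
      (getD_replicate _ (by omega))
  · rw [getD_append_right _ _ _ _ (by rw [length_replicate]; omega), length_replicate]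
    congr 1
    omega

theorem langOf_Xcoded_of_avoidsForb {n : ℕ} {u : List C5} (hu : AvoidsForb n u) :
    LangOf Xcoded u := by
  refine ⟨padded u, subset_closure (Set.mem_iUnion.mpr ⟨n, fun v hv hvx => ?_⟩), 0, fun j => ?_⟩
  · obtain ⟨j, l, hvu⟩ := exists_infix_of_occursIn_padded hvx
    exact (hu.replicate_one_append j).append_replicate_alpha l v hv hvu
  · simp [padded]

/-- The coded system X has property (D): for every σ ∈ Σ and every word a with
aσ ∈ L(X) there is a word w with wa ∈ L(X) such that σ ∈ ω₁⁺(wa). -/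
theorem stmt11 :
    ∀ (σ : C5) (a : List C5), LangOf Xcoded (a ++ [σ]) →
      ∃ w : List C5, LangOf Xcoded (w ++ a) ∧
        ∀ c : List C5, LangOf Xcoded (c ++ w ++ a) →
          LangOf Xcoded (c ++ w ++ a ++ [σ]) := by
  intro σ a haσ
  obtain ⟨n, hn⟩ := exists_avoidsForb_of_langOf haσ
  have ha : AvoidsForb n a := hn.of_infix (prefix_append a [σ]).isInfix
  refine ⟨replicate (a.length + 1) C5.one,
    langOf_Xcoded_of_avoidsForb (ha.replicate_one_append _), fun c hc => ?_⟩
  obtain ⟨m, hm⟩ := exists_avoidsForb_of_langOf hc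
  have hcw : AvoidsForb (max m n) (c ++ replicate (a.length + 1) C5.one) :=
    (hm.mono (le_max_left m n)).of_infix (prefix_append _ _).isInfix
  rw [append_assoc (c ++ _)]
  exact langOf_Xcoded_of_avoidsForb
    (hcw.append_replicate_one_append (hn.mono (le_max_right m n)) (by simp))
end

section
/- λ-synchronization implies that the family of vertex sets Vₗ = Sₗ(X)/∼ₗ (l-past equivalence classes of l-synchronizing words), edges labeled α from [αν]ₗ to [ν]_{l+1} for ν ∈ S_{l+1}(X) with αν ∈ L(X), and ι-maps [μ]_{l+1} ↦ [μ]ₗ, satisfies the local property of λ-graph systems: for u = [μ]ₗ ∈ Vₗ and v = [ν]_{l+2} ∈ V_{l+2}, there is a label-preserving bijection between edges from u to ι(v) and edges from some w ∈ V_{l+1} with ι(w) = u to v. -/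
variable {A : Type*}

/-- Drop a left letter: if `L (a :: u)` then `L u`. -/
lemma SubshiftLang.dropLeft (X : SubshiftLang A) (a : A) (u : List A)
    (h : X.L (a :: u)) : X.L u := by
  have := X.factorial [a] u []
  simp at this
  exact this h

/-- Any admissible word extends arbitrarily far to the left. -/
lemma SubshiftLang.leftExtend (X : SubshiftLang A) (n : ℕ) (u : List A)
    (h : X.L u) : ∃ b : List A, b.length = n ∧ X.L (b ++ u) := by
  induction n with
  | zero => exact ⟨[], rfl, h⟩
  | succ n ih =>
    obtain ⟨b, hb, hbu⟩ := ih
    obtain ⟨a, c, hac⟩ := X.extendable (b ++ u) hbu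
    refine ⟨a :: b, by simp [hb], ?_⟩
    have := X.factorial [] (a :: (b ++ u)) [c]
    simp at this
    exact this (by simpa using hac)

/-- Synchronizing at level `k+1` implies synchronizing at level `k`. -/
lemma SubshiftLang.sync_of_succ (X : SubshiftLang A) (k : ℕ) (v : List A)
    (h : X.Sync (k + 1) v) : X.Sync k v := by
  refine ⟨h.1, fun b hb hbv c hc => ?_⟩
  obtain ⟨e, he, hev⟩ := X.leftExtend 1 (b ++ v) hbv
  match e, he with
  | [a], _ =>
    have h2 : X.L ((a :: b) ++ v ++ c) := by
      have := h.2 (a :: b) (by simp [hb]) (by simpa using hev) c hc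
      simpa using this
    have := X.factorial [a] (b ++ v ++ c) []
    simp at this ⊢
    exact this (by simpa using h2)

/-- Past equivalence at level `k+1` implies past equivalence at level `k`. -/
lemma SubshiftLang.pastEq_of_succ (X : SubshiftLang A) (k : ℕ) (μ ν : List A)
    (h : X.PastEq (k + 1) μ ν) : X.PastEq k μ ν := by
  have key : ∀ μ ν : List A, X.PastEq (k + 1) μ ν → ∀ b : List A, b.length = k →
      X.L (b ++ μ) → X.L (b ++ ν) := by
    intro μ ν h b hb hbμ
    obtain ⟨e, he, hev⟩ := X.leftExtend 1 (b ++ μ) hbμ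
    match e, he with
    | [a], _ =>
      have h2 : X.L ((a :: b) ++ ν) :=
        ((h (a :: b) (by simp [hb])).mp (by simpa using hev))
      exact X.dropLeft a (b ++ ν) (by simpa using h2)
  intro b hb
  exact ⟨key μ ν h b hb, key ν μ (fun c hc => (h c hc).symm) b hb⟩

/-- Local property of the λ-synchronizing λ-graph system, stated at the level of
words: for μ ∈ Sₗ(X), ν ∈ S_{l+2}(X) and a label α, there is an edge labeled α
from [μ]ₗ to ι([ν]_{l+2}) = [ν]_{l+1} if and only if there is an edge labeled α
into [ν]_{l+2} whose source w ∈ V_{l+1} satisfies ι(w) = [μ]ₗ; this gives the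
label-preserving bijection E_ι(u,v) ≃ E^ι(u,v). -/
theorem stmt14 [Fintype A] (X : SubshiftLang A) (hX : X.LambdaSync)
    (l : ℕ) (μ ν : List A) (hμ : X.Sync l μ) (hν : X.Sync (l + 2) ν) (α : A) :
    (∃ ω : List A, X.Sync (l + 1) ω ∧ X.PastEq (l + 1) ω ν ∧
        X.L (α :: ω) ∧ X.PastEq l (α :: ω) μ) ↔
      (∃ ν' : List A, X.Sync (l + 2) ν' ∧ X.PastEq (l + 2) ν' ν ∧
        X.L (α :: ν') ∧ X.PastEq l (α :: ν') μ) := by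
  constructor
  · rintro ⟨ω, hωs, hων, hαω, hαωμ⟩
    -- take ν' = ν
    -- first show L (α :: ν)
    obtain ⟨b, hb, hbαω⟩ := X.leftExtend l (α :: ω) hαω
    have hbαω' : X.L ((b ++ [α]) ++ ω) := by simpa using hbαω
    have hbαν : X.L ((b ++ [α]) ++ ν) :=
      (hων (b ++ [α]) (by simp [hb])).mp hbαω'
    have hαν : X.L (α :: ν) := by
      have := X.factorial b (α :: ν) []
      simp at this
      exact this (by simpa using hbαν)
    refine ⟨ν, hν, fun c hc => Iff.rfl, hαν, ?_⟩
    intro c hc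
    have h1 : X.L (c ++ α :: ν) ↔ X.L (c ++ α :: ω) := by
      have := hων (c ++ [α]) (by simp [hc])
      simp only [List.append_assoc, List.singleton_append] at this
      exact this.symm
    rw [h1]
    exact hαωμ c hc
  · rintro ⟨ν', hν's, hν'ν, hαν', hαν'μ⟩
    exact ⟨ν', X.sync_of_succ (l + 1) ν' hν's, X.pastEq_of_succ (l + 1) ν' ν hν'ν,
      hαν', hαν'μ⟩
end

section
/- Let X be a λ-synchronizing subshift. Then X satisfies synchronizing condition (I) if and only if the λ-synchronizing λ-graph system 𝔏^{λ(X)} satisfies λ-condition (I): every vertex admits two distinct labeled paths starting at it with the same terminal vertex but different label sequences. -/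
variable {A : Type*}

/-- Synchronizing condition (I) for a λ-synchronizing subshift X. -/
def SubshiftLang.SyncCondI (X : SubshiftLang A) : Prop :=
  ∀ (l : ℕ) (μ : List A), X.Sync l μ →
    ∃ (K : ℕ) (γ₁ γ₂ ν : List A), γ₁.length = K ∧ γ₂.length = K ∧ γ₁ ≠ γ₂ ∧
      X.Sync (l + K) ν ∧ X.L (γ₁ ++ ν) ∧ X.L (γ₂ ++ ν) ∧
      X.PastEq l (γ₁ ++ ν) μ ∧ X.PastEq l (γ₂ ++ ν) μ

/-- λ-condition (I) for the λ-synchronizing λ-graph system 𝔏^{λ(X)}, at the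
level of words: from every vertex [μ]ₗ there are two distinct labeled paths with
the same terminal vertex but different label sequences. -/
def SubshiftLang.LambdaCondI (X : SubshiftLang A) : Prop :=
  ∀ (l : ℕ) (μ : List A), X.Sync l μ →
    ∃ (K : ℕ) (γ₁ γ₂ ν₁ ν₂ : List A), γ₁.length = K ∧ γ₂.length = K ∧ γ₁ ≠ γ₂ ∧
      X.Sync (l + K) ν₁ ∧ X.Sync (l + K) ν₂ ∧ X.PastEq (l + K) ν₁ ν₂ ∧
      X.L (γ₁ ++ ν₁) ∧ X.L (γ₂ ++ ν₂) ∧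
      X.PastEq l (γ₁ ++ ν₁) μ ∧ X.PastEq l (γ₂ ++ ν₂) μ

lemma SubshiftLang.leftExt (X : SubshiftLang A) :
    ∀ (n : ℕ) (u : List A), X.L u → ∃ b : List A, b.length = n ∧ X.L (b ++ u) := by
  intro n
  induction n with
  | zero => exact fun u hu => ⟨[], rfl, hu⟩
  | succ n ih =>
    intro u hu
    obtain ⟨b, hb, hbu⟩ := ih u hu
    obtain ⟨a, c, hac⟩ := X.extendable (b ++ u) hbu
    refine ⟨a :: b, by simp [hb], ?_⟩
    have := X.factorial [] (a :: (b ++ u)) [c] (by simpa using hac)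
    simpa using this

/-- Lemma 5.1: X satisfies synchronizing condition (I) iff 𝔏^{λ(X)} satisfies
λ-condition (I). -/
theorem stmt17 [Fintype A] (X : SubshiftLang A) (hX : X.LambdaSync) :
    X.SyncCondI ↔ X.LambdaCondI := by
  constructor
  · intro h l μ hμ
    obtain ⟨K, γ₁, γ₂, ν, h1, h2, h3, h4, h5, h6, h7, h8⟩ := h l μ hμ
    exact ⟨K, γ₁, γ₂, ν, ν, h1, h2, h3, h4, h4, fun b _ => Iff.rfl, h5, h6, h7, h8⟩
  · intro h l μ hμ
    obtain ⟨K, γ₁, γ₂, ν₁, ν₂, h1, h2, h3, h4, h5, hpe, h6, h7, h8, h9⟩ := h l μ hμ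
    -- show X.L (γ₂ ++ ν₁)
    obtain ⟨b, hb, hbL⟩ := X.leftExt l (γ₂ ++ ν₂) h7
    have hlen : (b ++ γ₂).length = l + K := by simp [hb, h2]
    have h7' : X.L ((b ++ γ₂) ++ ν₁) := by
      have := (hpe (b ++ γ₂) hlen).mpr (by simpa [List.append_assoc] using hbL)
      exact this
    have hγ₂ν₁ : X.L (γ₂ ++ ν₁) :=
      X.factorial b (γ₂ ++ ν₁) [] (by simpa [List.append_assoc] using h7')
    refine ⟨K, γ₁, γ₂, ν₁, h1, h2, h3, h4, h6, hγ₂ν₁, h8, ?_⟩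
    intro b' hb'
    have key : X.L (b' ++ (γ₂ ++ ν₁)) ↔ X.L (b' ++ (γ₂ ++ ν₂)) := by
      have hlen' : (b' ++ γ₂).length = l + K := by simp [hb', h2]
      have := hpe (b' ++ γ₂) hlen'
      simpa [List.append_assoc] using this
    exact key.trans (h9 b' hb')
end
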